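/- Assume that the set Ω ⊆ ℝⁿ is locally closed and strictly smooth at z̄ ∈ Ω. Then Ω is semismooth* at z̄. -/

import Mathlib

open Filter Topology Metric Set
open scoped RealInnerProductSpace NNReal ENNReal

noncomputable section

/-- Euclidean space `ℝⁿ`. -/
abbrev Euc (n : ℕ) : Type := EuclideanSpace ℝ (Fin n)

section NormedDefs

variable {X Y : Type*} [NormedAddCommGroup X] [NormedSpace ℝ X]
  [NormedAddCommGroup Y] [NormedSpace ℝ Y]

/-- The (Bouligand) tangent cone to `Ω` at `z`. -/
def tanCone (Ω : Set X) (z : X) : Set X :=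
  {w | ∃ (t : ℕ → ℝ) (wk : ℕ → X), (∀ k, 0 < t k) ∧ Tendsto t atTop (𝓝 0) ∧
      Tendsto wk atTop (𝓝 w) ∧ ∀ k, z + t k • wk k ∈ Ω}

/-- The regular (Clarke) tangent cone to `Ω` at `z`. -/
def clarkeCone (Ω : Set X) (z : X) : Set X :=
  {w | ∀ (zk : ℕ → X) (t : ℕ → ℝ), (∀ k, zk k ∈ Ω) → Tendsto zk atTop (𝓝 z) →
      (∀ k, 0 < t k) → Tendsto t atTop (𝓝 0) →
      ∃ wk : ℕ → X, Tendsto wk atTop (𝓝 w) ∧ ∀ k, zk k + t k • wk k ∈ Ω}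

/-- The paratingent cone to `Ω` at `z`. -/
def paraCone (Ω : Set X) (z : X) : Set X :=
  {w | ∃ (zk : ℕ → X) (t : ℕ → ℝ) (wk : ℕ → X), (∀ k, zk k ∈ Ω) ∧
      Tendsto zk atTop (𝓝 z) ∧ (∀ k, 0 < t k) ∧ Tendsto t atTop (𝓝 0) ∧
      Tendsto wk atTop (𝓝 w) ∧ ∀ k, zk k + t k • wk k ∈ Ω}

/-- `Ω` is strictly smooth at `z` if the Clarke tangent cone and the paratingent
cone coincide there. -/
def StrictlySmoothAt (Ω : Set X) (z : X) : Prop := clarkeCone Ω z = paraCone Ω z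

/-- `Ω` is geometrically derivable at `z`. -/
def GeomDerivableAt (Ω : Set X) (z : X) : Prop :=
  ∀ w ∈ tanCone Ω z, ∀ t : ℕ → ℝ, (∀ k, 0 < t k) → Tendsto t atTop (𝓝 0) →
    ∃ wk : ℕ → X, Tendsto wk atTop (𝓝 w) ∧ ∀ k, z + t k • wk k ∈ Ω

/-- `Ω` is locally closed at `z`. -/
def LocallyClosedAt (Ω : Set X) (z : X) : Prop :=
  ∃ V : Set X, V ∈ 𝓝 z ∧ IsClosed V ∧ IsClosed (Ω ∩ V)

/-- The set `s` is a linear subspace. -/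
def IsLinearSubspace (s : Set X) : Prop := ∃ S : Submodule ℝ X, (S : Set X) = s

/-- The set `s` is a linear subspace of dimension `d`. -/
def HasDim (s : Set X) (d : ℕ) : Prop :=
  ∃ S : Submodule ℝ X, (S : Set X) = s ∧ Module.finrank ℝ S = d

/-- The graph of a set-valued mapping. -/
def gphOf (Fm : X → Set Y) : Set (X × Y) := {p | p.2 ∈ Fm p.1}

/-- The graph of a single-valued mapping defined on `U`. -/
def gphOn (f : X → Y) (U : Set X) : Set (X × Y) := {p | p.1 ∈ U ∧ p.2 = f p.1}

/-- `f` (defined on `U`) is strictly continuous (locally Lipschitz) at `xb`. -/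
def StrictlyContinuousAt' (f : X → Y) (U : Set X) (xb : X) : Prop :=
  ∃ U' ∈ 𝓝 xb, U' ⊆ U ∧ ∃ κ : ℝ, 0 ≤ κ ∧
    ∀ x ∈ U', ∀ x' ∈ U', ‖f x - f x'‖ ≤ κ * ‖x - x'‖

/-- `f` (defined on `U`) is calm at `xb`. -/
def CalmAt' (f : X → Y) (U : Set X) (xb : X) : Prop :=
  ∃ U' ∈ 𝓝 xb, U' ⊆ U ∧ ∃ κ : ℝ, 0 ≤ κ ∧ ∀ x ∈ U', ‖f x - f xb‖ ≤ κ * ‖x - xb‖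

/-- `f` (defined on `U`) is strictly differentiable at `xb`. -/
def StrictDiffOnAt (f : X → Y) (U : Set X) (xb : X) : Prop :=
  ∃ A : X →L[ℝ] Y, ∀ ε : ℝ, 0 < ε → ∃ δ > 0, ∀ x ∈ U, ∀ x' ∈ U,
    ‖x - xb‖ < δ → ‖x' - xb‖ < δ → ‖f x' - f x - A (x' - x)‖ ≤ ε * ‖x' - x‖

/-- `f` (defined on `U`) is Fréchet differentiable at `xb`. -/
def FrechetDiffOnAt (f : X → Y) (U : Set X) (xb : X) : Prop :=
  ∃ A : X →L[ℝ] Y, ∀ ε : ℝ, 0 < ε → ∃ δ > 0, ∀ x ∈ U,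
    ‖x - xb‖ < δ → ‖f x - f xb - A (x - xb)‖ ≤ ε * ‖x - xb‖

/-- The B-Jacobian (Bouligand limiting Jacobian) of `f` at `xb`. -/
def BJacobian (f : X → Y) (U : Set X) (xb : X) : Set (X →L[ℝ] Y) :=
  {A | ∃ (xk : ℕ → X) (Ak : ℕ → X →L[ℝ] Y),
      (∀ k, xk k ∈ U ∧ HasFDerivAt f (Ak k) (xk k)) ∧
      Tendsto xk atTop (𝓝 xb) ∧ Tendsto Ak atTop (𝓝 A)}

/-- `Ω ⊆ X` is a Lipschitz manifold of dimension `d` (and codimension `c`) around `z`: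
up to a `C¹` change of coordinates `Φ`, `Ω` locally coincides with the graph of a
Lipschitz mapping `f : U → ℝᶜ`, `U ⊆ ℝᵈ` open. -/
def IsLipschitzManifoldAt (Ω : Set X) (d c : ℕ) (z : X) : Prop :=
  ∃ (W : Set X) (Φ : X → Euc d × Euc c) (Ψ : Euc d × Euc c → X)
    (U : Set (Euc d)) (f : Euc d → Euc c) (K : ℝ≥0),
    IsOpen W ∧ z ∈ W ∧ IsOpen (Φ '' W) ∧
    ContDiffOn ℝ 1 Φ W ∧ ContDiffOn ℝ 1 Ψ (Φ '' W) ∧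
    (∀ x ∈ W, Ψ (Φ x) = x) ∧ (∀ y ∈ Φ '' W, Φ (Ψ y) = y) ∧
    IsOpen U ∧ LipschitzOnWith K f U ∧
    Φ '' (Ω ∩ W) = {p | p.1 ∈ U ∧ p.2 = f p.1}

/-- As `IsLipschitzManifoldAt`, with the Lipschitz mapping `f` moreover strictly
differentiable at the transformed reference point. -/
def IsGraphStrictDiffAt (Ω : Set X) (d c : ℕ) (z : X) : Prop :=
  ∃ (W : Set X) (Φ : X → Euc d × Euc c) (Ψ : Euc d × Euc c → X)
    (U : Set (Euc d)) (f : Euc d → Euc c) (K : ℝ≥0),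
    IsOpen W ∧ z ∈ W ∧ IsOpen (Φ '' W) ∧
    ContDiffOn ℝ 1 Φ W ∧ ContDiffOn ℝ 1 Ψ (Φ '' W) ∧
    (∀ x ∈ W, Ψ (Φ x) = x) ∧ (∀ y ∈ Φ '' W, Φ (Ψ y) = y) ∧
    IsOpen U ∧ LipschitzOnWith K f U ∧
    Φ '' (Ω ∩ W) = {p | p.1 ∈ U ∧ p.2 = f p.1} ∧
    StrictDiffOnAt f U (Φ z).1

/-- Strong metric subregularity of a set-valued mapping at `(xb, yb)`. -/
def StronglySubregAt (Fm : X → Set Y) (xb : X) (yb : Y) : Prop :=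
  ∃ κ : ℝ≥0, ∃ U ∈ 𝓝 xb, ∀ x ∈ U,
    (‖x - xb‖₊ : ℝ≥0∞) ≤ (κ : ℝ≥0∞) * EMetric.infEdist yb (Fm x)

/-- Metric regularity of a set-valued mapping around `(xb, yb)`. -/
def MetricallyRegularAround (Fm : X → Set Y) (xb : X) (yb : Y) : Prop :=
  ∃ κ : ℝ≥0, ∃ U ∈ 𝓝 xb, ∃ V ∈ 𝓝 yb, ∀ x ∈ U, ∀ y ∈ V,
    EMetric.infEdist x {x' | y ∈ Fm x'} ≤ (κ : ℝ≥0∞) * EMetric.infEdist y (Fm x)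

/-- Strong metric regularity of a set-valued mapping around `(xb, yb)`. -/
def StronglyRegularAround (Fm : X → Set Y) (xb : X) (yb : Y) : Prop :=
  MetricallyRegularAround Fm xb yb ∧
  ∃ (U' : Set X) (V' : Set Y) (h : Y → X), IsOpen U' ∧ IsOpen V' ∧
    xb ∈ U' ∧ yb ∈ V' ∧ h yb = xb ∧
    gphOf Fm ∩ (U' ×ˢ V') = {p | p.2 ∈ V' ∧ p.1 = h p.2}

end NormedDefs

section InnerDefs

variable {E F : Type*} [NormedAddCommGroup E] [InnerProductSpace ℝ E]
  [NormedAddCommGroup F] [InnerProductSpace ℝ F]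

/-- The regular (Fréchet) normal cone: the polar of the tangent cone. -/
def regNormal (Ω : Set E) (z : E) : Set E := {v | ∀ w ∈ tanCone Ω z, ⟪v, w⟫ ≤ 0}

/-- The limiting (Mordukhovich) normal cone. -/
def limNormal (Ω : Set E) (z : E) : Set E :=
  {v | ∃ zk vk : ℕ → E, (∀ k, zk k ∈ Ω) ∧ Tendsto zk atTop (𝓝 z) ∧
      (∀ k, vk k ∈ regNormal Ω (zk k)) ∧ Tendsto vk atTop (𝓝 v)}

/-- `Ω` is normally regular at `z`. -/
def NormallyRegularAt (Ω : Set E) (z : E) : Prop := regNormal Ω z = limNormal Ω z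

/-- The orthogonal complement (as a set) of a set. -/
def orthSet (s : Set E) : Set E := {v | ∀ w ∈ s, ⟪v, w⟫ = 0}

/-- `Ω` is semismooth* at `zb`. -/
def SemismoothStarAt (Ω : Set E) (zb : E) : Prop :=
  ∀ ε : ℝ, 0 < ε → ∃ δ > 0, ∀ z ∈ Ω, ‖z - zb‖ < δ → ∀ v ∈ limNormal Ω z,
    |⟪v, z - zb⟫| ≤ ε * ‖z - zb‖ * ‖v‖

/-- The canonical inner product of the product of two inner product spaces. -/
def inner2 (p q : E × F) : ℝ := ⟪p.1, q.1⟫ + ⟪p.2, q.2⟫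

/-- The regular normal cone for subsets of a product space. -/
def regNormal2 (Ω : Set (E × F)) (z : E × F) : Set (E × F) :=
  {v | ∀ w ∈ tanCone Ω z, inner2 v w ≤ 0}

/-- The limiting normal cone for subsets of a product space. -/
def limNormal2 (Ω : Set (E × F)) (z : E × F) : Set (E × F) :=
  {v | ∃ zk vk : ℕ → E × F, (∀ k, zk k ∈ Ω) ∧ Tendsto zk atTop (𝓝 z) ∧
      (∀ k, vk k ∈ regNormal2 Ω (zk k)) ∧ Tendsto vk atTop (𝓝 v)}

/-- Normal regularity for subsets of a product space. -/
def NormallyRegular2At (Ω : Set (E × F)) (z : E × F) : Prop :=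
  regNormal2 Ω z = limNormal2 Ω z

/-- Orthogonal complement (as a set) in a product space. -/
def orthSet2 (s : Set (E × F)) : Set (E × F) := {v | ∀ w ∈ s, inner2 v w = 0}

/-- The graph of the limiting coderivative of a mapping with graph `Γ` at `z`:
`{(y*, x*) : (x*, -y*) ∈ N_Γ(z)}`. -/
def coderivGraph (Γ : Set (E × F)) (z : E × F) : Set (F × E) :=
  {q | (q.2, -q.1) ∈ limNormal2 Γ z}

/-- The semismooth* property for subsets of a product space (i.e. for mappings). -/
def SemismoothStar2At (Ω : Set (E × F)) (zb : E × F) : Prop :=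
  ∀ ε : ℝ, 0 < ε → ∃ δ > 0, ∀ z ∈ Ω, ‖z - zb‖ < δ → ∀ v ∈ limNormal2 Ω z,
    |inner2 v (z - zb)| ≤ ε * ‖z - zb‖ * ‖v‖

/-- The regular subdifferential of an extended-real-valued function. -/
def regSubdiff (φ : E → EReal) (xb : E) : Set E :=
  {v | φ xb ≠ ⊤ ∧ φ xb ≠ ⊥ ∧ ∀ ε : ℝ, 0 < ε → ∃ δ > 0, ∀ x, ‖x - xb‖ < δ →
      φ xb + ((⟪v, x - xb⟫ - ε * ‖x - xb‖ : ℝ) : EReal) ≤ φ x}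

/-- The limiting (Mordukhovich) subdifferential. -/
def limSubdiff (φ : E → EReal) (xb : E) : Set E :=
  {v | ∃ xk vk : ℕ → E, Tendsto xk atTop (𝓝 xb) ∧
      Tendsto (fun k => φ (xk k)) atTop (𝓝 (φ xb)) ∧
      (∀ k, vk k ∈ regSubdiff φ (xk k)) ∧ Tendsto vk atTop (𝓝 v)}

/-- `φ` is prox-regular at `xb` for `vb` with parameters `r ≥ 0` and `ε > 0`. -/
def ProxRegular (φ : E → EReal) (xb vb : E) (r ε : ℝ) : Prop :=
  ∀ x' x v, ‖x' - xb‖ < ε → v ∈ limSubdiff φ x → ‖x - xb‖ < ε → ‖v - vb‖ < ε →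
    φ x < φ xb + (ε : EReal) →
    φ x + ((⟪v, x' - x⟫ - r / 2 * ‖x' - x‖ ^ 2 : ℝ) : EReal) ≤ φ x'

/-- The graph of the `φ`-attentive `ε`-localization of `∂φ` around `(xb, vb)`. -/
def attLocGraph (φ : E → EReal) (xb vb : E) (ε : ℝ) : Set (E × E) :=
  {p | p.2 ∈ limSubdiff φ p.1 ∧ ‖p.1 - xb‖ < ε ∧ ‖p.2 - vb‖ < ε ∧
      φ p.1 < φ xb + (ε : EReal)}

end InnerDefs

/-- The map `ℝⁿ → ℝᵈ × ℝᶜ` obtained from a permutation (re-indexing) of the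
coordinates followed by splitting them into the first `d` and the last `c` ones. -/
def permSplit {n d c : ℕ} (e : Fin n ≃ (Fin d ⊕ Fin c)) (z : Euc n) : Euc d × Euc c :=
  (show Euc d from WithLp.toLp 2 (fun i => z (e.symm (Sum.inl i))),
   show Euc c from WithLp.toLp 2 (fun j => z (e.symm (Sum.inr j))))

/-! If semismoothness* failed, normalising the offending pairs `(z - z̄, z*)` and passing to a
subsequence would give a limiting normal `u` at `z̄` and a tangent direction `w` with
`⟨u, w⟩ ≠ 0`. But `w` and `-w` are paratingent, hence Clarke tangent by strict smoothness, and
limiting normals are polar to the Clarke cone (regular normals are Fréchet normals in finite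
dimensions), so `⟨u, w⟩ = 0`. -/

lemma tendsto_of_dist_lt_one_div_succ {α : Type*} [PseudoMetricSpace α] {x y : ℕ → α} {a : α}
    (hy : Tendsto y atTop (𝓝 a)) (h : ∀ k : ℕ, dist (x k) (y k) < 1 / (k + 1)) :
    Tendsto x atTop (𝓝 a) :=
  hy.congr_dist <| squeeze_zero (fun _ => dist_nonneg) (fun k => (dist_comm (y k) (x k)).trans_le
    (h k).le) tendsto_one_div_add_atTop_nhds_zero_nat

section Cones

variable {X : Type*} [NormedAddCommGroup X] [NormedSpace ℝ X] {Ω : Set X} {z w : X}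

lemma mem_tanCone_of_tendsto_normalize {x : ℕ → X} (hxΩ : ∀ k, x k ∈ Ω)
    (hxz : Tendsto x atTop (𝓝 z)) (hne : ∀ k, x k ≠ z)
    (hw : Tendsto (fun k => ‖x k - z‖⁻¹ • (x k - z)) atTop (𝓝 w)) : w ∈ tanCone Ω z := by
  refine ⟨fun k => ‖x k - z‖, _, fun k => norm_pos_iff.2 (sub_ne_zero.2 (hne k)), ?_, hw,
    fun k => ?_⟩
  · simpa using (hxz.sub_const z).norm
  · rw [smul_inv_smul₀ (norm_ne_zero_iff.2 (sub_ne_zero.2 (hne k))), add_sub_cancel]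
    exact hxΩ k

lemma tanCone_subset_paraCone (hz : z ∈ Ω) : tanCone Ω z ⊆ paraCone Ω z :=
  fun _ ⟨t, wk, ht, ht0, hwk, hmem⟩ =>
    ⟨fun _ => z, t, wk, fun _ => hz, tendsto_const_nhds, ht, ht0, hwk, hmem⟩

lemma neg_mem_paraCone (hw : w ∈ paraCone Ω z) : -w ∈ paraCone Ω z := by
  obtain ⟨zk, t, wk, hzk, hzkz, ht, ht0, hwk, hmem⟩ := hw
  refine ⟨fun k => zk k + t k • wk k, t, fun k => -wk k, hmem, ?_, ht, ht0, hwk.neg,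
    fun k => ?_⟩
  · simpa using hzkz.add (ht0.smul hwk)
  · simpa using hzk k

end Cones

section Normals

variable {E : Type*} [NormedAddCommGroup E] [InnerProductSpace ℝ E] {Ω : Set E} {z v : E}

lemma smul_mem_regNormal (hv : v ∈ regNormal Ω z) {c : ℝ} (hc : 0 ≤ c) :
    c • v ∈ regNormal Ω z := fun w hw => by
  rw [real_inner_smul_left]
  exact mul_nonpos_of_nonneg_of_nonpos hc (hv w hw)

lemma smul_mem_limNormal (hv : v ∈ limNormal Ω z) {c : ℝ} (hc : 0 ≤ c) :
    c • v ∈ limNormal Ω z := by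
  obtain ⟨zk, vk, hzk, hzkz, hvk, hvkv⟩ := hv
  exact ⟨zk, fun k => c • vk k, hzk, hzkz, fun k => smul_mem_regNormal (hvk k) hc,
    hvkv.const_smul c⟩

lemma mem_limNormal_of_tendsto {zk vk : ℕ → E} (hzk : Tendsto zk atTop (𝓝 z))
    (hvk : ∀ k, vk k ∈ limNormal Ω (zk k)) (hv : Tendsto vk atTop (𝓝 v)) :
    v ∈ limNormal Ω z := by
  have hdiag : ∀ k : ℕ, ∃ a b : E, a ∈ Ω ∧ b ∈ regNormal Ω a ∧
      dist a (zk k) < 1 / (k + 1) ∧ dist b (vk k) < 1 / (k + 1) := by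
    intro k
    obtain ⟨a, b, haΩ, ha, hb, hbv⟩ := hvk k
    have hr : (0 : ℝ) < 1 / (k + 1) := by positivity
    obtain ⟨j, hja, hjb⟩ :=
      ((ha.eventually (ball_mem_nhds _ hr)).and (hbv.eventually (ball_mem_nhds _ hr))).exists
    exact ⟨a j, b j, haΩ j, hb j, hja, hjb⟩
  choose a b haΩ hb ha hb' using hdiag
  exact ⟨a, b, haΩ, tendsto_of_dist_lt_one_div_succ hzk ha, hb,
    tendsto_of_dist_lt_one_div_succ hv hb'⟩

lemma lt_abs_inner_normalize {x y : E} {ε : ℝ} (h : ε * ‖y‖ * ‖x‖ < |⟪x, y⟫|) :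
    ε < |⟪‖x‖⁻¹ • x, ‖y‖⁻¹ • y⟫| := by
  have hx : 0 < ‖x‖ := norm_pos_iff.2 fun hx => by simp [hx] at h
  have hy : 0 < ‖y‖ := norm_pos_iff.2 fun hy => by simp [hy] at h
  rw [real_inner_smul_left, real_inner_smul_right, abs_mul, abs_mul, abs_inv, abs_inv,
    abs_norm, abs_norm, lt_inv_mul_iff₀ hx, lt_inv_mul_iff₀ hy]
  linarith

variable [ProperSpace E]

lemma exists_inner_sub_le_of_mem_regNormal (hv : v ∈ regNormal Ω z) {ε : ℝ} (hε : 0 < ε) :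
    ∃ δ > 0, ∀ z' ∈ Ω, ‖z' - z‖ < δ → ⟪v, z' - z⟫ ≤ ε * ‖z' - z‖ := by
  by_contra! h
  choose x hxΩ hxz hvx using fun k : ℕ => h (1 / (k + 1)) (by positivity)
  have hne : ∀ k, x k ≠ z := fun k hk => by simpa [hk] using hvx k
  have hpos : ∀ k, 0 < ‖x k - z‖ := fun k => norm_pos_iff.2 (sub_ne_zero.2 (hne k))
  have hdir : ∀ k, ‖x k - z‖⁻¹ • (x k - z) ∈ sphere (0 : E) 1 := fun k =>
    mem_sphere_zero_iff_norm.2 (norm_smul_inv_norm (sub_ne_zero.2 (hne k)))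
  obtain ⟨w, -, φ, hφ, hw⟩ := (isCompact_sphere (0 : E) 1).tendsto_subseq hdir
  have hxz' : Tendsto x atTop (𝓝 z) :=
    tendsto_of_dist_lt_one_div_succ tendsto_const_nhds fun k => by rw [dist_eq_norm]; exact hxz k
  have hwT : w ∈ tanCone Ω z := mem_tanCone_of_tendsto_normalize (fun k => hxΩ (φ k))
    (hxz'.comp hφ.tendsto_atTop) (fun k => hne (φ k)) hw
  have hge : ∀ k, ε ≤ ⟪v, ‖x (φ k) - z‖⁻¹ • (x (φ k) - z)⟫ := fun k => by
    rw [real_inner_smul_right, inv_mul_eq_div, le_div_iff₀ (hpos _)]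
    exact (hvx _).le
  linarith [hv w hwT, ge_of_tendsto' (tendsto_const_nhds.inner hw) hge]

lemma inner_nonpos_of_mem_limNormal_of_mem_clarkeCone {y : E} (hv : v ∈ limNormal Ω z)
    (hy : y ∈ clarkeCone Ω z) : ⟪v, y⟫ ≤ 0 := by
  obtain ⟨a, b, haΩ, haz, hb, hbv⟩ := hv
  choose δ hδ hδb using fun k : ℕ =>
    exists_inner_sub_le_of_mem_regNormal (hb k) (ε := 1 / (k + 1)) (by positivity)
  -- short enough steps keep `a k + s k • p` within `δ k` of `a k` as long as `‖p‖ < ‖y‖ + 1`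
  set s : ℕ → ℝ := fun k => min (1 / (k + 1)) (δ k / (‖y‖ + 1))
  have hs : ∀ k, 0 < s k := fun k => lt_min (by positivity) (div_pos (hδ k) (by positivity))
  have hs0 : Tendsto s atTop (𝓝 0) := squeeze_zero (fun k => (hs k).le)
    (fun k => min_le_left _ _) tendsto_one_div_add_atTop_nhds_zero_nat
  obtain ⟨p, hpy, hpΩ⟩ := hy a s haΩ haz hs hs0
  have hev : ∀ᶠ k : ℕ in atTop, ⟪b k, p k⟫ ≤ 1 / (k + 1) * ‖p k‖ := by
    filter_upwards [hpy.norm.eventually (gt_mem_nhds (lt_add_one ‖y‖))] with k hk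
    have hstep : ‖a k + s k • p k - a k‖ < δ k := by
      rw [add_sub_cancel_left, norm_smul, Real.norm_of_nonneg (hs k).le]
      calc s k * ‖p k‖ < s k * (‖y‖ + 1) := mul_lt_mul_of_pos_left hk (hs k)
        _ ≤ δ k := (le_div_iff₀ (by positivity)).1 (min_le_right _ _)
    have h := hδb k _ (hpΩ k) hstep
    rw [add_sub_cancel_left, real_inner_smul_right, norm_smul, Real.norm_of_nonneg (hs k).le,
      mul_left_comm] at h
    exact le_of_mul_le_mul_left h (hs k)
  have hlim : Tendsto (fun k : ℕ => 1 / ((k : ℝ) + 1) * ‖p k‖) atTop (𝓝 0) := by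
    simpa using tendsto_one_div_add_atTop_nhds_zero_nat.mul hpy.norm
  exact le_of_tendsto_of_tendsto (hbv.inner hpy) hlim hev

lemma inner_eq_zero_of_mem_limNormal_of_mem_tanCone {u w : E} (hz : z ∈ Ω)
    (hss : StrictlySmoothAt Ω z) (hu : u ∈ limNormal Ω z) (hw : w ∈ tanCone Ω z) :
    ⟪u, w⟫ = 0 := by
  have hwP := tanCone_subset_paraCone hz hw
  have h₁ := inner_nonpos_of_mem_limNormal_of_mem_clarkeCone hu (by rw [hss]; exact hwP)
  have h₂ := inner_nonpos_of_mem_limNormal_of_mem_clarkeCone hu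
    (by rw [hss]; exact neg_mem_paraCone hwP)
  rw [inner_neg_right] at h₂
  linarith

theorem semismoothStarAt_of_inner_eq_zero
    (h : ∀ u ∈ limNormal Ω z, ∀ w ∈ tanCone Ω z, ⟪u, w⟫ = 0) : SemismoothStarAt Ω z := by
  unfold SemismoothStarAt
  by_contra! hns
  obtain ⟨ε, hε, hbad⟩ := hns
  choose x hxΩ hxz v' hv' hbig using fun k : ℕ => hbad (1 / (k + 1)) (by positivity)
  have hlt : ∀ k, ε < |⟪‖v' k‖⁻¹ • v' k, ‖x k - z‖⁻¹ • (x k - z)⟫| := fun k =>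
    lt_abs_inner_normalize (hbig k)
  have hv0 : ∀ k, v' k ≠ 0 := fun k hk => by simpa [hk, hε.not_gt] using hlt k
  have hx0 : ∀ k, x k ≠ z := fun k hk => by simpa [hk, hε.not_gt] using hlt k
  have hsph : ∀ k, (‖v' k‖⁻¹ • v' k, ‖x k - z‖⁻¹ • (x k - z)) ∈
      sphere (0 : E) 1 ×ˢ sphere (0 : E) 1 := fun k =>
    ⟨mem_sphere_zero_iff_norm.2 (norm_smul_inv_norm (hv0 k)),
      mem_sphere_zero_iff_norm.2 (norm_smul_inv_norm (sub_ne_zero.2 (hx0 k)))⟩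
  obtain ⟨⟨u, w⟩, -, φ, hφ, huw⟩ :=
    ((isCompact_sphere (0 : E) 1).prod (isCompact_sphere (0 : E) 1)).tendsto_subseq hsph
  have hxφ : Tendsto (x ∘ φ) atTop (𝓝 z) := (tendsto_of_dist_lt_one_div_succ tendsto_const_nhds
    fun k => by rw [dist_eq_norm]; exact hxz k).comp hφ.tendsto_atTop
  have hu : u ∈ limNormal Ω z := mem_limNormal_of_tendsto hxφ
    (fun k => smul_mem_limNormal (hv' (φ k)) (inv_nonneg.2 (norm_nonneg _))) huw.fst_nhds
  have hw : w ∈ tanCone Ω z := mem_tanCone_of_tendsto_normalize (fun k => hxΩ (φ k)) hxφ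
    (fun k => hx0 (φ k)) huw.snd_nhds
  have hεle := ge_of_tendsto' (huw.fst_nhds.inner huw.snd_nhds).abs fun k => (hlt (φ k)).le
  rw [h u hu w hw, abs_zero] at hεle
  linarith

end Normals

theorem stmt_11_general {n : ℕ} (Ω : Set (Euc n)) (zb : Euc n) (hz : zb ∈ Ω)
    (hss : StrictlySmoothAt Ω zb) :
    SemismoothStarAt Ω zb :=
  semismoothStarAt_of_inner_eq_zero fun _ hu _ hw =>
    inner_eq_zero_of_mem_limNormal_of_mem_tanCone hz hss hu hw

/-- Theorem 3.5(i): a locally closed set which is strictly smooth at a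
point is semismooth* there. -/
theorem stmt_11 {n : ℕ} (Ω : Set (Euc n)) (zb : Euc n) (hz : zb ∈ Ω)
    (hloc : LocallyClosedAt Ω zb) (hss : StrictlySmoothAt Ω zb) :
    SemismoothStarAt Ω zb :=
  stmt_11_general Ω zb hz hss
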